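/- For every integer k ≥ 2, RR(x+y+(2k−1)z=(2k−1)w) = 3k−1; that is, N = 3k−1 is the least positive integer such that every 2-coloring χ : {1,…,N} → {0,1} admits positive integers x,y,z,w ≤ N with χ(x)=χ(y)=χ(z)=χ(w) and x + y + (2k−1)·z = (2k−1)·w. -/

import Mathlib

/-!
Write `m = 2k - 1`. A solution of `x + y + m z = m w` is `x + y = m d` with `w = z + d`, and
inside `{1, …, 3k - 1}` only `d ≤ 3` is possible.

Colouring `{1, …, 3k - 2}` by alternately coloured blocks of two consecutive integers, aligned
so that `k - 1` and `k` lie in different blocks, leaves no monochromatic solution: `d = 1` needs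
a monochromatic pair with sum `m`, `d = 2` a monochromatic pair `z, z + 2`, and `d = 3` is too big.

Conversely, let `χ` have no monochromatic solution on `{1, …, 3k - 1}`. With `d = 2`, the pair
`x = y = m` shows that no `z, z + 2` both have the colour of `m`; so `m - 2` and `m + 2` have the
other colour, and the pair `x = m - 2, y = m + 2` excludes that colour too. Hence
`χ z ≠ χ (z + 2)` for all `z`, so `χ` is a block colouring as above. As `(3k - 2) - (k - 1)` is
odd, either `{k - 1, k}` is a block, giving the solution `(k - 1, k, k - 1, k)`, or
`{3k - 2, 3k - 1}` is, giving `(3k - 2, 3k - 1, 3k - 5, 3k - 2)`.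
-/

/-- The set of positive integers `N` such that every 2-coloring of `{1, ..., N}`
admits a monochromatic solution to `x + y + k*z = l*w`. -/
def radoSet (k l : ℕ) : Set ℕ :=
  {N : ℕ | 0 < N ∧ ∀ χ : ℕ → Fin 2, ∃ x y z w : ℕ,
    x ∈ Finset.Icc 1 N ∧ y ∈ Finset.Icc 1 N ∧ z ∈ Finset.Icc 1 N ∧ w ∈ Finset.Icc 1 N ∧
    χ x = χ y ∧ χ y = χ z ∧ χ z = χ w ∧ x + y + k * z = l * w}

theorem Fin.two_eq_of_ne_of_ne {a b c : Fin 2} (ha : a ≠ c) (hb : b ≠ c) : a = b := by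
  revert a b c; decide

theorem eq_mul_sub_of_add_mul_eq {a m z w : ℕ} (h : a + m * z = m * w) : a = m * (w - z) := by
  rw [Nat.mul_sub]; omega

def NoMonoSolution (a b N : ℕ) (χ : ℕ → Fin 2) : Prop :=
  ∀ x ∈ Finset.Icc 1 N, ∀ y ∈ Finset.Icc 1 N, ∀ z ∈ Finset.Icc 1 N, ∀ w ∈ Finset.Icc 1 N,
    χ x = χ y → χ y = χ z → χ z = χ w → x + y + a * z ≠ b * w

theorem mem_radoSet_iff {a b N : ℕ} :
    N ∈ radoSet a b ↔ 0 < N ∧ ∀ χ, ¬ NoMonoSolution a b N χ := by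
  simp only [radoSet, NoMonoSolution, Set.mem_ofPred_eq, not_forall, not_not, exists_prop,
    exists_and_left]

namespace NoMonoSolution

variable {a b m M N : ℕ} {χ : ℕ → Fin 2}

theorem mono (h : NoMonoSolution a b N χ) (hMN : M ≤ N) : NoMonoSolution a b M χ := by
  intro x hx y hy z hz w hw
  exact h x (Finset.Icc_subset_Icc_right hMN hx) y (Finset.Icc_subset_Icc_right hMN hy)
    z (Finset.Icc_subset_Icc_right hMN hz) w (Finset.Icc_subset_Icc_right hMN hw)

theorem ne_of_add_eq_mul (h : NoMonoSolution m m N χ) {x y z w d : ℕ}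
    (hx : 1 ≤ x) (hxN : x ≤ N) (hy : 1 ≤ y) (hyN : y ≤ N) (hz : 1 ≤ z) (hwN : w ≤ N)
    (hzw : z + d = w) (hsum : x + y = m * d) (hxy : χ x = χ y) (hyz : χ y = χ z) :
    χ z ≠ χ w := by
  intro hzw'
  refine h x (Finset.mem_Icc.2 ⟨hx, hxN⟩) y (Finset.mem_Icc.2 ⟨hy, hyN⟩)
    z (Finset.mem_Icc.2 ⟨hz, by omega⟩) w (Finset.mem_Icc.2 ⟨by omega, hwN⟩) hxy hyz hzw' ?_
  rw [← hzw, Nat.mul_add, ← hsum, Nat.add_comm]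

end NoMonoSolution

def blockColoring (s i : ℕ) : Fin 2 := ⟨(i + s) / 2 % 2, Nat.mod_lt _ two_pos⟩

theorem noMonoSolution_blockColoring (k : ℕ) :
    NoMonoSolution (2 * k - 1) (2 * k - 1) (3 * k - 2) (blockColoring (k % 2)) := by
  intro x hx y hy z hz w hw hxy hyz hzw heq
  simp only [Finset.mem_Icc] at hx hy hz hw
  simp only [blockColoring, Fin.mk.injEq] at hxy hyz hzw
  have hsum := eq_mul_sub_of_add_mul_eq heq
  have hd : w - z < 3 := by
    by_contra! hd
    have := Nat.mul_le_mul_left (2 * k - 1) hd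
    omega
  interval_cases hwz : w - z <;> omega

section UpperBound

variable {k : ℕ} {χ : ℕ → Fin 2}

theorem NoMonoSolution.ne_of_add_two_eq (hk : 2 ≤ k)
    (hχ : NoMonoSolution (2 * k - 1) (2 * k - 1) (3 * k - 1) χ) {z w : ℕ}
    (hz : 1 ≤ z) (hwN : w ≤ 3 * k - 1) (hzw : z + 2 = w) : χ z ≠ χ w := by
  set m := 2 * k - 1
  have hm : ∀ z w, 1 ≤ z → w ≤ 3 * k - 1 → z + 2 = w → χ z = χ m → χ z ≠ χ w :=
    fun z w hz hwN hzw hzm =>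
      hχ.ne_of_add_eq_mul (x := m) (y := m) (by omega) (by omega) (by omega) (by omega)
        hz hwN hzw (by omega) rfl hzm.symm
  have hlo : χ (m - 2) ≠ χ m := fun h => hm _ _ (by omega) (by omega) (by omega) h h
  have hhi : χ (m + 2) ≠ χ m := (hm _ _ (by omega) (by omega) rfl rfl).symm
  have hlohi : χ (m - 2) = χ (m + 2) := Fin.two_eq_of_ne_of_ne hlo hhi
  by_cases hzm : χ z = χ m
  · exact hm z w hz hwN hzw hzm
  · have hz' : χ z = χ (m - 2) := Fin.two_eq_of_ne_of_ne hzm hlo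
    exact hχ.ne_of_add_eq_mul (x := m - 2) (y := m + 2) (by omega) (by omega) (by omega)
      (by omega) hz hwN hzw (by omega) hlohi (hlohi.symm.trans hz'.symm)

theorem eq_add_one_add_two_mul {f : ℕ → Fin 2} {a b : ℕ}
    (hf : ∀ z w, a ≤ z → w ≤ b → z + 2 = w → f z ≠ f w) {i : ℕ} (hi : a ≤ i)
    (hfi : f i = f (i + 1)) (j : ℕ) (hj : i + 2 * j + 1 ≤ b) :
    f (i + 2 * j) = f (i + 2 * j + 1) := by
  induction j with
  | zero => exact hfi
  | succ j ih =>
    have hlo := hf (i + 2 * j) (i + 2 * (j + 1)) (by omega) (by omega) (by ring)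
    have hhi := hf (i + 2 * j + 1) (i + 2 * (j + 1) + 1) (by omega) (by omega) (by ring)
    rw [ih (by omega)] at hlo
    exact Fin.two_eq_of_ne_of_ne hlo.symm hhi.symm

theorem not_noMonoSolution_three_mul_sub_one (hk : 2 ≤ k) :
    ¬ NoMonoSolution (2 * k - 1) (2 * k - 1) (3 * k - 1) χ := by
  intro hχ
  have hne : ∀ z w, 1 ≤ z → w ≤ 3 * k - 1 → z + 2 = w → χ z ≠ χ w :=
    fun _ _ => hχ.ne_of_add_two_eq hk
  by_cases hlow : χ (k - 1) = χ k
  · exact hχ.ne_of_add_eq_mul (x := k - 1) (y := k) (d := 1) (by omega) (by omega) (by omega)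
      (by omega) (by omega) (by omega) (by omega) (by omega) hlow hlow.symm hlow
  · have hmid : χ k = χ (k + 1) :=
      Fin.two_eq_of_ne_of_ne (Ne.symm hlow) (hne _ _ (by omega) (by omega) (by omega)).symm
    have htop : χ (3 * k - 2) = χ (3 * k - 1) := by
      convert eq_add_one_add_two_mul hne (by omega) hmid (k - 1) (by omega) using 2 <;> omega
    have hbot : χ (3 * k - 5) = χ (3 * k - 1) :=
      Fin.two_eq_of_ne_of_ne (hne _ (3 * k - 3) (by omega) (by omega) (by omega))
        (hne _ _ (by omega) (by omega) (by omega)).symm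
    exact hχ.ne_of_add_eq_mul (x := 3 * k - 2) (y := 3 * k - 1) (d := 3) (by omega) (by omega)
      (by omega) (by omega) (by omega) (by omega) (by omega) (by omega) htop hbot.symm
      (hbot.trans htop.symm)

end UpperBound

/-- For `k ≥ 2`, `RR(x + y + (2k-1)*z = (2k-1)*w) = 3k - 1`. -/
theorem RR_two_k_sub_one (k : ℕ) (hk : 2 ≤ k) :
    IsLeast (radoSet (2 * k - 1) (2 * k - 1)) (3 * k - 1) := by
  refine ⟨mem_radoSet_iff.2 ⟨by omega, fun χ => not_noMonoSolution_three_mul_sub_one hk⟩, fun N hN => ?_⟩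
  by_contra! hN'
  exact (mem_radoSet_iff.1 hN).2 _ ((noMonoSolution_blockColoring k).mono (by omega))
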